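/- arXiv:2003.03731 — 2 statements merged into one kernel-verified Lean document; each statement's English description precedes it below -/
import Mathlib

section
/- Let X ⊆ ℝⁿ be a nonempty compact convex set, let A ∈ ℝ^{ℓ×n} with rows A_1,…,A_ℓ, and let c ∈ ℝ^ℓ. Then c ∈ C_SAGE(A,X) if and only if there exist vectors c^{(1)},…,c^{(ℓ)} ∈ ℝ^ℓ with ∑_{i=1}^ℓ c^{(i)} = c such that for each i ∈ {1,…,ℓ}: c^{(i)}_j ≥ 0 for all j ≠ i, and there exist (v^{(i)}_j)_{j≠i} with v^{(i)}_j ≥ 0 for all j ≠ i, with v^{(i)}_j = 0 whenever c^{(i)}_j = 0, and λ^{(i)} ∈ ℝⁿ satisfying σ_X(λ^{(i)}) + ∑_{j≠i} v^{(i)}_j · log(v^{(i)}_j / c^{(i)}_j) − ∑_{j≠i} v^{(i)}_j ≤ c^{(i)}_i and ∑_{j≠i} v^{(i)}_j · (A_j − A_i) + λ^{(i)} = 0, where a summand v_j · log(v_j / c_j) is interpreted as 0 when v_j = 0. -/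
open scoped BigOperators

/-- The signomial `Sig(c, A)(x) = ∑ j, c j * exp(A j ⬝ x)`. -/
noncomputable def Sig {ℓ n : ℕ} (c : Fin ℓ → ℝ) (A : Fin ℓ → Fin n → ℝ) :
    (Fin n → ℝ) → ℝ :=
  fun x => ∑ j, c j * Real.exp (∑ i, A j i * x i)

/-- The support function `σ_X(λ) = sup_{x ∈ X} λ ⬝ x` of a set `X ⊆ ℝⁿ`. -/
noncomputable def suppFn {n : ℕ} (X : Set (Fin n → ℝ)) (lam : Fin n → ℝ) : ℝ :=
  sSup ((fun x => ∑ k, lam k * x k) '' X)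

/-- Membership in the conditional SAGE cone `C_SAGE(A, X)`:
`c` decomposes as `∑ i, c⁽ⁱ⁾` where `c⁽ⁱ⁾ ∈ C_AGE(A, X, i)`. -/
def memCSAGE {ℓ n : ℕ} (A : Fin ℓ → Fin n → ℝ) (X : Set (Fin n → ℝ))
    (c : Fin ℓ → ℝ) : Prop :=
  ∃ cs : Fin ℓ → Fin ℓ → ℝ,
    (∀ j, ∑ i, cs i j = c j) ∧
    ∀ i, (∀ j, j ≠ i → 0 ≤ cs i j) ∧ ∀ x ∈ X, 0 ≤ Sig (cs i) A x

/-! Fix `i` and put `B j = A j - A i`. Dividing by `exp (A i ⬝ᵥ x)`, nonnegativity of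
`Sig c A` on `X` says `c i + f ≥ 0` on `X`, where `f x = ∑_{j ≠ i} c j * exp (B j ⬝ᵥ x)`.
Summing the Fenchel–Young inequality `v t + v - v log (v / c) ≤ c eᵗ` at `t = B j ⬝ᵥ x` and
using `lam ⬝ᵥ x ≤ σ_X(lam)` shows that a certificate `(v, lam)` forces `f ≥ -c i` on `X`.
Conversely, at a minimiser `x₀` of `f` on the compact set `X`, the weights
`v j = c j * exp (B j ⬝ᵥ x₀)` and `lam = -∑ v j • B j = -∇f(x₀)` form a certificate: first-order
optimality on the convex set `X` makes `x₀` a maximiser of `lam ⬝ᵥ ·`, and Young's inequality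
is an equality at `v = c eᵗ`. -/

open Finset Real

theorem mul_add_sub_mul_log_div_le_mul_exp {c v t : ℝ} (hc : 0 ≤ c) (hv : 0 ≤ v)
    (hvc : c = 0 → v = 0) : v * t + v - v * log (v / c) ≤ c * exp t := by
  rcases hv.eq_or_lt with rfl | hv
  · simpa using mul_nonneg hc (exp_pos t).le
  have hc : 0 < c := hc.lt_of_ne fun h => hv.ne' (hvc h.symm)
  -- `e^s ≥ 1 + s` at `s = t - log (v / c)`, multiplied by `v`
  have key : v * (t - log (v / c) + 1) ≤ v * exp (t - log (v / c)) :=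
    mul_le_mul_of_nonneg_left (add_one_le_exp _) hv.le
  rw [exp_sub, exp_log (by positivity)] at key
  calc v * t + v - v * log (v / c) = v * (t - log (v / c) + 1) := by ring
    _ ≤ v * (exp t / (v / c)) := key
    _ = c * exp t := by field_simp

theorem mul_exp_mul_log_mul_exp_div (c t : ℝ) :
    c * exp t * log (c * exp t / c) = c * exp t * t := by
  rcases eq_or_ne c 0 with rfl | hc
  · simp
  · rw [mul_div_cancel_left₀ _ hc, log_exp]

theorem IsMinOn.hasFDerivAt_apply_sub_nonneg {E : Type*} [NormedAddCommGroup E]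
    [NormedSpace ℝ E] {f : E → ℝ} {f' : StrongDual ℝ E} {s : Set E} {a x : E}
    (h : IsMinOn f s a) (hf : HasFDerivAt f f' a) (hs : Convex ℝ s) (ha : a ∈ s)
    (hx : x ∈ s) : 0 ≤ f' (x - a) :=
  h.localize.hasFDerivWithinAt_nonneg hf.hasFDerivWithinAt
    (sub_mem_posTangentConeAt_of_segment_subset (hs.segment_subset ha hx))

theorem hasFDerivAt_sum_mul_exp_dotProduct {ι m : Type*} [Fintype m] (s : Finset ι)
    (c : ι → ℝ) (B : ι → m → ℝ) (x : m → ℝ) :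
    HasFDerivAt (fun y => ∑ j ∈ s, c j * exp (B j ⬝ᵥ y))
      (∑ j ∈ s, (c j * exp (B j ⬝ᵥ x)) • (dotProductBilin ℝ ℝ (B j)).toContinuousLinearMap) x := by
  refine HasFDerivAt.fun_sum fun j _ => ?_
  have hlin := (dotProductBilin ℝ ℝ (B j)).toContinuousLinearMap.hasFDerivAt (x := x)
  simpa [smul_smul, mul_comm] using (hlin.exp.const_mul (c j))

theorem forall_sum_mul_add_eq_zero_iff {ι m : Type*} (s : Finset ι) (v : ι → ℝ)
    (B : ι → m → ℝ) (lam : m → ℝ) :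
    (∀ k, (∑ j ∈ s, v j * B j k) + lam k = 0) ↔ lam = -∑ j ∈ s, v j • B j := by
  rw [eq_neg_iff_add_eq_zero, funext_iff]
  simp [Finset.sum_apply, add_comm]

section SupportFunction

variable {n : ℕ} {X : Set (Fin n → ℝ)}

theorem dotProduct_le_suppFn (hX : IsCompact X) (lam : Fin n → ℝ) {x : Fin n → ℝ}
    (hx : x ∈ X) : lam ⬝ᵥ x ≤ suppFn X lam :=
  le_csSup ((hX.image (by fun_prop)).bddAbove) (Set.mem_image_of_mem (lam ⬝ᵥ ·) hx)

theorem suppFn_eq_of_isMaxOn {lam x₀ : Fin n → ℝ} (hx₀ : x₀ ∈ X)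
    (hmax : IsMaxOn (lam ⬝ᵥ ·) X x₀) : suppFn X lam = lam ⬝ᵥ x₀ :=
  IsGreatest.csSup_eq ⟨Set.mem_image_of_mem (lam ⬝ᵥ ·) hx₀, Set.forall_mem_image.2 hmax⟩

end SupportFunction

section ConditionalAGE

variable {ℓ n : ℕ}

theorem Sig_eq_exp_mul (c : Fin ℓ → ℝ) (A : Fin ℓ → Fin n → ℝ) (i : Fin ℓ) (x : Fin n → ℝ) :
    Sig c A x = exp (A i ⬝ᵥ x) *
      (c i + ∑ j ∈ univ.erase i, c j * exp ((A j - A i) ⬝ᵥ x)) := by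
  change ∑ j, c j * exp (A j ⬝ᵥ x) = _
  rw [← add_sum_erase _ _ (mem_univ i), mul_add, mul_sum, mul_comm]
  congr 1
  refine sum_congr rfl fun j _ => ?_
  rw [sub_dotProduct, exp_sub]
  field_simp

theorem Sig_nonneg_iff (c : Fin ℓ → ℝ) (A : Fin ℓ → Fin n → ℝ) (i : Fin ℓ) (x : Fin n → ℝ) :
    0 ≤ Sig c A x ↔ 0 ≤ c i + ∑ j ∈ univ.erase i, c j * exp ((A j - A i) ⬝ᵥ x) := by
  rw [Sig_eq_exp_mul c A i, mul_nonneg_iff_of_pos_left (exp_pos _)]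

def memCAGE (A : Fin ℓ → Fin n → ℝ) (X : Set (Fin n → ℝ)) (i : Fin ℓ) (c : Fin ℓ → ℝ) : Prop :=
  (∀ j, j ≠ i → 0 ≤ c j) ∧ ∀ x ∈ X, 0 ≤ Sig c A x

def IsRelEntCertificate (A : Fin ℓ → Fin n → ℝ) (X : Set (Fin n → ℝ)) (i : Fin ℓ)
    (c v : Fin ℓ → ℝ) (lam : Fin n → ℝ) : Prop :=
  (∀ j, j ≠ i → 0 ≤ v j) ∧
  (∀ j, j ≠ i → c j = 0 → v j = 0) ∧
  suppFn X lam + ∑ j ∈ univ.erase i, v j * log (v j / c j) - ∑ j ∈ univ.erase i, v j ≤ c i ∧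
  ∀ k, (∑ j ∈ univ.erase i, v j * (A j k - A i k)) + lam k = 0

variable {A : Fin ℓ → Fin n → ℝ} {X : Set (Fin n → ℝ)} {i : Fin ℓ} {c : Fin ℓ → ℝ}

theorem memCAGE_of_isRelEntCertificate (hX : IsCompact X) (hc : ∀ j, j ≠ i → 0 ≤ c j)
    {v : Fin ℓ → ℝ} {lam : Fin n → ℝ} (h : IsRelEntCertificate A X i c v lam) :
    memCAGE A X i c := by
  obtain ⟨hv, hvc, hbound, hlin⟩ := h
  replace hlin := (forall_sum_mul_add_eq_zero_iff _ v (fun j => A j - A i) lam).1 hlin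
  refine ⟨hc, fun x hx => (Sig_nonneg_iff c A i x).2 ?_⟩
  have hlam : lam ⬝ᵥ x = -∑ j ∈ univ.erase i, v j * ((A j - A i) ⬝ᵥ x) := by
    simp [hlin, sum_dotProduct, smul_dotProduct]
  have hyoung : ∑ j ∈ univ.erase i, (v j * ((A j - A i) ⬝ᵥ x) + v j - v j * log (v j / c j))
      ≤ ∑ j ∈ univ.erase i, c j * exp ((A j - A i) ⬝ᵥ x) :=
    sum_le_sum fun j hj =>
      mul_add_sub_mul_log_div_le_mul_exp (hc j (ne_of_mem_erase hj)) (hv j (ne_of_mem_erase hj))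
        (hvc j (ne_of_mem_erase hj))
  rw [sum_sub_distrib, sum_add_distrib] at hyoung
  linarith [dotProduct_le_suppFn hX lam hx]

theorem exists_isRelEntCertificate_of_memCAGE (hXne : X.Nonempty) (hXc : IsCompact X)
    (hXconv : Convex ℝ X) (h : memCAGE A X i c) :
    ∃ v lam, IsRelEntCertificate A X i c v lam := by
  obtain ⟨hc, hSig⟩ := h
  set B : Fin ℓ → Fin n → ℝ := fun j => A j - A i
  obtain ⟨x₀, hx₀, hmin⟩ := hXc.exists_isMinOn hXne
    (by fun_prop : Continuous fun x => ∑ j ∈ univ.erase i, c j * exp (B j ⬝ᵥ x)).continuousOn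
  set v : Fin ℓ → ℝ := fun j => c j * exp (B j ⬝ᵥ x₀)
  set lam : Fin n → ℝ := -∑ j ∈ univ.erase i, v j • B j
  have hlam (x : Fin n → ℝ) : lam ⬝ᵥ x = -∑ j ∈ univ.erase i, v j * (B j ⬝ᵥ x) := by
    simp [lam, sum_dotProduct, smul_dotProduct]
  have hmax : IsMaxOn (lam ⬝ᵥ ·) X x₀ := fun x hx => by
    have hfirst := hmin.hasFDerivAt_apply_sub_nonneg
      (hasFDerivAt_sum_mul_exp_dotProduct _ c B x₀) hXconv hx₀ hx
    simp only [FunLike.coe_sum, FunLike.coe_smul, Finset.sum_apply,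
      Pi.smul_apply, LinearMap.coe_toContinuousLinearMap', dotProductBilin_apply_apply,
      dotProduct_sub, mul_sub, sum_sub_distrib, smul_eq_mul] at hfirst
    change lam ⬝ᵥ x ≤ lam ⬝ᵥ x₀
    rw [hlam, hlam]
    linarith
  have hlog : ∑ j ∈ univ.erase i, v j * log (v j / c j) = -(lam ⬝ᵥ x₀) := by
    simp only [hlam, neg_neg, v, mul_exp_mul_log_mul_exp_div]
  have hsum : 0 ≤ c i + ∑ j ∈ univ.erase i, v j := (Sig_nonneg_iff c A i x₀).1 (hSig x₀ hx₀)
  refine ⟨v, lam, fun j hj => mul_nonneg (hc j hj) (exp_pos _).le, fun j _ hj => by simp [v, hj],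
    ?_, (forall_sum_mul_add_eq_zero_iff _ v B lam).2 rfl⟩
  rw [suppFn_eq_of_isMaxOn hx₀ hmax, hlog]
  linarith

theorem memCAGE_iff_exists_isRelEntCertificate (hXne : X.Nonempty) (hXc : IsCompact X)
    (hXconv : Convex ℝ X) :
    memCAGE A X i c ↔ (∀ j, j ≠ i → 0 ≤ c j) ∧ ∃ v lam, IsRelEntCertificate A X i c v lam :=
  ⟨fun h => ⟨h.1, exists_isRelEntCertificate_of_memCAGE hXne hXc hXconv h⟩,
    fun ⟨hc, _, _, h⟩ => memCAGE_of_isRelEntCertificate hXc hc h⟩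

end ConditionalAGE

/-- Relative-entropy characterization of the conditional SAGE cone.
The summand `v j * log (v j / c j)` is literally `0` when `v j = 0`. -/
theorem stmt3 {ℓ n : ℕ} (X : Set (Fin n → ℝ)) (hXne : X.Nonempty)
    (hXcompact : IsCompact X) (hXconvex : Convex ℝ X)
    (A : Fin ℓ → Fin n → ℝ) (c : Fin ℓ → ℝ) :
    memCSAGE A X c ↔
      ∃ cs : Fin ℓ → Fin ℓ → ℝ,
        (∀ j, ∑ i, cs i j = c j) ∧
        ∀ i, (∀ j, j ≠ i → 0 ≤ cs i j) ∧
          ∃ (v : Fin ℓ → ℝ) (lam : Fin n → ℝ),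
            (∀ j, j ≠ i → 0 ≤ v j) ∧
            (∀ j, j ≠ i → cs i j = 0 → v j = 0) ∧
            suppFn X lam
                + ∑ j ∈ Finset.univ.erase i, v j * Real.log (v j / cs i j)
                - ∑ j ∈ Finset.univ.erase i, v j ≤ cs i i ∧
            ∀ k, (∑ j ∈ Finset.univ.erase i, v j * (A j k - A i k)) + lam k = 0 :=
  exists_congr fun _ => and_congr_right' <| forall_congr' fun _ =>
    memCAGE_iff_exists_isRelEntCertificate hXne hXcompact hXconvex
end

section
/- Let A ∈ ℝ^{ℓ×n} with rows A_1,…,A_ℓ, let X ⊆ ℝⁿ, let c ∈ ℝ^ℓ, and let p ∈ ℕ. If the function x ↦ (∑_{j=1}^ℓ exp(A_j · x))^p · Sig(c,A)(x) is X-SAGE with exponents in E_{p+1}(A), then the function x ↦ (∑_{j=1}^ℓ exp(A_j · x))^{p+1} · Sig(c,A)(x) is X-SAGE with exponents in E_{p+2}(A). -/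
/-!
Multiplying `g` by `∑ j, exp(A_j · x)` gives the sum of the `ℓ` products `exp(A_j · x) · g`.
Multiplying an AGE function by a single exponential `exp(a · x)` translates its exponents by `a`,
keeps the sign pattern of the coefficients and keeps nonnegativity on `X`; translation by a row
`A_j` maps `E_q(A)` into `E_{q+1}(A)`, and SAGE functions are closed under finite sums.
-/

open scoped BigOperators

/-- `g` is an `X`-AGE function with exponents in the finite set `E`:
it is a signomial supported on `E` with at most one negative coefficient,
and it is nonnegative on `X`. -/
def IsAGE {n : ℕ} (X : Set (Fin n → ℝ)) (E : Finset (Fin n → ℝ))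
    (g : (Fin n → ℝ) → ℝ) : Prop :=
  (∃ d : (Fin n → ℝ) → ℝ,
      (∀ x, g x = ∑ α ∈ E, d α * Real.exp (∑ i, α i * x i)) ∧
      ∃ α₀, ∀ α ∈ E, α ≠ α₀ → 0 ≤ d α) ∧
    ∀ x ∈ X, 0 ≤ g x

/-- `g` is `X`-SAGE with exponents in `E`: a finite sum of `X`-AGE functions
with exponents in `E`. -/
def IsSAGE {n : ℕ} (X : Set (Fin n → ℝ)) (E : Finset (Fin n → ℝ))
    (g : (Fin n → ℝ) → ℝ) : Prop :=
  ∃ (k : ℕ) (gs : Fin k → (Fin n → ℝ) → ℝ),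
    (∀ j, IsAGE X E (gs j)) ∧ ∀ x, g x = ∑ j, gs j x

/-- `E_q(A) = { ∑ j, m j • A j : m ∈ ℕ^ℓ, ∑ j, m j = q }` as a finite set.
(Each `m j ≤ q`, so indexing by `Fin (q+1)` captures all of them.) -/
noncomputable def expSet {ℓ n : ℕ} (A : Fin ℓ → Fin n → ℝ) (q : ℕ) :
    Finset (Fin n → ℝ) :=
  Finset.image (fun m : Fin ℓ → Fin (q + 1) => fun i => ∑ j, (m j : ℕ) * A j i)
    (Finset.univ.filter fun m : Fin ℓ → Fin (q + 1) => ∑ j, (m j : ℕ) = q)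

open Finset

lemma mem_expSet_iff {ℓ n : ℕ} (A : Fin ℓ → Fin n → ℝ) (q : ℕ) (α : Fin n → ℝ) :
    α ∈ expSet A q ↔
      ∃ m : Fin ℓ → ℕ, ∑ j, m j = q ∧ α = fun i => ∑ j, (m j : ℝ) * A j i := by
  simp only [expSet, mem_image, mem_filter, mem_univ, true_and]
  constructor
  · rintro ⟨m, hm, rfl⟩
    exact ⟨fun j => m j, hm, rfl⟩
  · rintro ⟨m, hm, rfl⟩
    have hle : ∀ j, m j ≤ q := fun j => hm ▸ single_le_sum (fun _ _ => Nat.zero_le _) (mem_univ j)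
    exact ⟨fun j => ⟨m j, Nat.lt_succ_of_le (hle j)⟩, hm, rfl⟩

lemma add_mem_expSet_succ {ℓ n : ℕ} (A : Fin ℓ → Fin n → ℝ) {q : ℕ} (j₀ : Fin ℓ)
    {α : Fin n → ℝ} (hα : α ∈ expSet A q) : α + A j₀ ∈ expSet A (q + 1) := by
  rw [mem_expSet_iff] at hα ⊢
  obtain ⟨m, hm, rfl⟩ := hα
  refine ⟨m + Pi.single j₀ 1, by simp [sum_add_distrib, hm], ?_⟩
  funext i
  simp [add_mul, sum_add_distrib, Pi.single_apply, ite_mul]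

lemma sum_add_apply_mul {n : ℕ} (α a x : Fin n → ℝ) :
    ∑ i, (α + a) i * x i = ∑ i, α i * x i + ∑ i, a i * x i :=
  add_dotProduct α a x

section

variable {n : ℕ} {X : Set (Fin n → ℝ)} {E E' : Finset (Fin n → ℝ)} {g : (Fin n → ℝ) → ℝ}

theorem IsAGE.exp_mul (a : Fin n → ℝ) (hE : ∀ α ∈ E, α + a ∈ E') (hg : IsAGE X E g) :
    IsAGE X E' (fun x => Real.exp (∑ i, a i * x i) * g x) := by
  obtain ⟨⟨d, hd, α₀, hα₀⟩, hnonneg⟩ := hg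
  refine ⟨⟨fun β => if β - a ∈ E then d (β - a) else 0, fun x => ?_, α₀ + a, ?_⟩,
    fun x hx => mul_nonneg (Real.exp_pos _).le (hnonneg x hx)⟩
  · simp only [ite_mul, zero_mul]
    rw [← sum_filter, hd x, mul_sum]
    refine sum_nbij' (· + a) (· - a) (fun α hα => mem_filter.mpr ⟨hE α hα, by simpa using hα⟩)
      (fun β hβ => (mem_filter.mp hβ).2) (fun α _ => by simp) (fun β _ => by simp) fun α _ => ?_
    rw [add_sub_cancel_right, sum_add_apply_mul, Real.exp_add]
    ring
  · intro β _ hne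
    dsimp only
    split_ifs with hβ
    · exact hα₀ _ hβ fun h => hne (by rw [← h, sub_add_cancel])
    · exact le_rfl

theorem IsSAGE.exp_mul (a : Fin n → ℝ) (hE : ∀ α ∈ E, α + a ∈ E') (hg : IsSAGE X E g) :
    IsSAGE X E' (fun x => Real.exp (∑ i, a i * x i) * g x) := by
  obtain ⟨k, gs, hage, hsum⟩ := hg
  exact ⟨k, fun j x => Real.exp (∑ i, a i * x i) * gs j x, fun j => (hage j).exp_mul a hE,
    fun x => by simp only [hsum x, mul_sum]⟩

theorem IsSAGE.zero : IsSAGE X E 0 :=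
  ⟨0, Fin.elim0, fun j => j.elim0, fun _ => rfl⟩

theorem IsSAGE.add {g₁ g₂ : (Fin n → ℝ) → ℝ} (h₁ : IsSAGE X E g₁) (h₂ : IsSAGE X E g₂) :
    IsSAGE X E (g₁ + g₂) := by
  obtain ⟨k₁, gs₁, hage₁, hsum₁⟩ := h₁
  obtain ⟨k₂, gs₂, hage₂, hsum₂⟩ := h₂
  refine ⟨k₁ + k₂, Fin.append gs₁ gs₂, Fin.addCases (by simpa using hage₁) (by simpa using hage₂),
    fun x => ?_⟩
  simp [Fin.sum_univ_add, hsum₁ x, hsum₂ x]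

theorem IsSAGE.sum {ι : Type*} (s : Finset ι) {f : ι → (Fin n → ℝ) → ℝ}
    (hf : ∀ i ∈ s, IsSAGE X E (f i)) : IsSAGE X E (fun x => ∑ i ∈ s, f i x) := by
  classical
  induction s using Finset.induction_on with
  | empty => exact IsSAGE.zero
  | insert i s hi ih =>
    simp only [sum_insert hi]
    exact (hf i (mem_insert_self i s)).add (ih fun j hj => hf j (mem_insert_of_mem hj))

end

/-- Monotonicity of the SAGE hierarchy: membership at level `p` implies
membership at level `p + 1`. -/
theorem stmt4 {ℓ n : ℕ} (A : Fin ℓ → Fin n → ℝ) (X : Set (Fin n → ℝ))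
    (c : Fin ℓ → ℝ) (p : ℕ)
    (h : IsSAGE X (expSet A (p + 1))
      (fun x => (∑ j, Real.exp (∑ i, A j i * x i)) ^ p * Sig c A x)) :
    IsSAGE X (expSet A (p + 2))
      (fun x => (∑ j, Real.exp (∑ i, A j i * x i)) ^ (p + 1) * Sig c A x) := by
  have hfactor : (fun x => (∑ j, Real.exp (∑ i, A j i * x i)) ^ (p + 1) * Sig c A x) =
      fun x => ∑ j, Real.exp (∑ i, A j i * x i) *
        ((∑ j, Real.exp (∑ i, A j i * x i)) ^ p * Sig c A x) := by
    funext x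
    rw [pow_succ', mul_assoc, sum_mul]
  rw [hfactor]
  exact IsSAGE.sum univ fun j _ => h.exp_mul (A j) fun α hα => add_mem_expSet_succ A j hα
end
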